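/- Let μ and ν be nonzero finite Borel measures on ℝ with compact support, x₊ = sup(supp μ), y₊ = sup(supp ν), z₊ = x₊ + y₊. Suppose the pointwise dimensions D_p(x₊; μ) = d₁ and D_p(y₊; ν) = d₂ exist as finite limits. Then the pointwise dimension of μ ∗ ν at z₊ exists and D_p(z₊; μ ∗ ν) = d₁ + d₂. (Lemma 2, right-boundary version.) -/

import Mathlib

open MeasureTheory Topology Filter

/-- Convolution of two Borel measures on ℝ: pushforward of the product measure
under the addition map. -/
noncomputable def mconv (μ ν : Measure ℝ) : Measure ℝ :=
  (μ.prod ν).map (fun p : ℝ × ℝ => p.1 + p.2)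

/-- Topological support of a Borel measure on ℝ: the (closed) set of points all of
whose neighbourhoods have positive measure. -/
def msupp (μ : Measure ℝ) : Set ℝ := {x : ℝ | ∀ ε > 0, 0 < μ (Metric.ball x ε)}

lemma msupp_compl_null (μ : Measure ℝ) : μ (msupp μ)ᶜ = 0 := by
  apply measure_null_of_locally_null
  intro x hx
  simp only [msupp, Set.mem_compl_iff, Set.mem_setOf_eq, not_forall] at hx
  obtain ⟨ε, hε, h0⟩ := hx
  exact ⟨Metric.ball x ε, mem_nhdsWithin_of_mem_nhds (Metric.ball_mem_nhds x hε),
    by simpa using h0⟩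

lemma msupp_nonempty (μ : Measure ℝ) [IsFiniteMeasure μ] (hμ0 : μ ≠ 0) :
    (msupp μ).Nonempty := by
  by_contra h
  rw [Set.not_nonempty_iff_eq_empty] at h
  have := msupp_compl_null μ
  rw [h, Set.compl_empty] at this
  exact hμ0 (by ext s hs; simp [measure_mono_null (Set.subset_univ s) this])

lemma measure_Ioi_sSup (μ : Measure ℝ) [IsFiniteMeasure μ] (hc : IsCompact (msupp μ)) :
    μ (Set.Ioi (sSup (msupp μ))) = 0 := by
  refine measure_mono_null (fun x hx => ?_) (msupp_compl_null μ)
  intro hmem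
  exact absurd (le_csSup hc.bddAbove hmem) (not_le.2 hx)

lemma mconv_ball_bounds (μ ν : Measure ℝ) [IsFiniteMeasure μ] [IsFiniteMeasure ν]
    {x₀ y₀ : ℝ} (hμI : μ (Set.Ioi x₀) = 0) (hνI : ν (Set.Ioi y₀) = 0) (ε : ℝ) :
    μ (Metric.ball x₀ (ε/2)) * ν (Metric.ball y₀ (ε/2))
      ≤ mconv μ ν (Metric.ball (x₀ + y₀) ε) ∧
    mconv μ ν (Metric.ball (x₀ + y₀) ε)
      ≤ μ (Metric.ball x₀ ε) * ν (Metric.ball y₀ ε) := by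
  have hmap : mconv μ ν (Metric.ball (x₀ + y₀) ε)
      = (μ.prod ν) ((fun p : ℝ × ℝ => p.1 + p.2) ⁻¹' Metric.ball (x₀ + y₀) ε) :=
    Measure.map_apply (measurable_fst.add measurable_snd) measurableSet_ball
  constructor
  · rw [hmap]
    calc μ (Metric.ball x₀ (ε/2)) * ν (Metric.ball y₀ (ε/2))
        = μ (Metric.ball x₀ (ε/2) ∩ Set.Iic x₀) * ν (Metric.ball y₀ (ε/2) ∩ Set.Iic y₀) := by
          rw [measure_inter_conull (by rwa [Set.compl_Iic, ← Set.Ioi_def]),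
            measure_inter_conull (by rwa [Set.compl_Iic, ← Set.Ioi_def])]
      _ = (μ.prod ν) ((Metric.ball x₀ (ε/2) ∩ Set.Iic x₀) ×ˢ (Metric.ball y₀ (ε/2) ∩ Set.Iic y₀)) :=
          (Measure.prod_prod _ _).symm
      _ ≤ _ := by
          apply measure_mono
          rintro ⟨a, b⟩ ⟨⟨ha, ha'⟩, hb, hb'⟩
          simp only [Metric.mem_ball, Real.dist_eq, Set.mem_Iic, Set.mem_preimage,
            abs_lt] at *
          constructor <;> linarith [ha.1, ha.2, hb.1, hb.2]
  · rw [hmap,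
      ← measure_inter_conull (t := Set.Iic x₀ ×ˢ Set.Iic y₀) (by
        refine measure_mono_null (fun p hp => ?_)
          (?_ : (μ.prod ν) ((Set.Ioi x₀ ×ˢ (Set.univ : Set ℝ)) ∪ ((Set.univ : Set ℝ) ×ˢ Set.Ioi y₀)) = 0)
        · simp only [Set.mem_compl_iff, Set.mem_prod, Set.mem_Iic, not_and_or, not_le] at hp
          rcases hp with h | h
          · exact Or.inl ⟨h, Set.mem_univ _⟩
          · exact Or.inr ⟨Set.mem_univ _, h⟩
        · refine le_antisymm (le_trans (measure_union_le _ _) ?_) zero_le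
          rw [Measure.prod_prod, Measure.prod_prod, hμI, hνI]
          simp)]
    calc (μ.prod ν) (((fun p : ℝ × ℝ => p.1 + p.2) ⁻¹' Metric.ball (x₀ + y₀) ε)
            ∩ Set.Iic x₀ ×ˢ Set.Iic y₀)
        ≤ (μ.prod ν) (Metric.ball x₀ ε ×ˢ Metric.ball y₀ ε) := by
          apply measure_mono
          rintro ⟨a, b⟩ ⟨hab, ha, hb⟩
          simp only [Metric.mem_ball, Real.dist_eq, Set.mem_Iic, Set.mem_preimage,
            Set.mem_prod, abs_lt] at *
          constructor <;> constructor <;> linarith [hab.1, hab.2]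
      _ = μ (Metric.ball x₀ ε) * ν (Metric.ball y₀ ε) := Measure.prod_prod _ _

lemma tendsto_half : Tendsto (fun ε : ℝ => ε / 2) (𝓝[>] 0) (𝓝[>] 0) := by
  apply tendsto_nhdsWithin_of_tendsto_nhds_of_eventually_within
  · have : Tendsto (fun ε : ℝ => ε / 2) (𝓝 0) (𝓝 (0 / 2)) :=
      (continuous_id.div_const 2).tendsto 0
    simpa using this.mono_left nhdsWithin_le_nhds
  · filter_upwards [self_mem_nhdsWithin] with a ha
    exact div_pos (show (0:ℝ) < a from ha) two_pos

lemma tendsto_log_half_div : Tendsto (fun ε : ℝ => Real.log (ε / 2) / Real.log ε)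
    (𝓝[>] 0) (𝓝 1) := by
  have hinv : Tendsto (fun ε : ℝ => (Real.log ε)⁻¹) (𝓝[>] 0) (𝓝 0) := by
    have h1 : Tendsto (fun ε : ℝ => -Real.log ε) (𝓝[>] 0) atTop :=
      tendsto_neg_atBot_atTop.comp Real.tendsto_log_nhdsGT_zero
    have := h1.inv_tendsto_atTop
    have h2 : Tendsto (fun ε : ℝ => -(-Real.log ε)⁻¹) (𝓝[>] 0) (𝓝 (-0)) := this.neg
    simpa [inv_neg] using h2
  have key : Tendsto (fun ε : ℝ => 1 - Real.log 2 * (Real.log ε)⁻¹) (𝓝[>] 0) (𝓝 1) := by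
    have := (tendsto_const_nhds (x := (1:ℝ)) (f := 𝓝[>] (0:ℝ))).sub
      ((tendsto_const_nhds (x := Real.log 2) (f := 𝓝[>] (0:ℝ))).mul hinv)
    simpa using this
  refine key.congr' ?_
  filter_upwards [Ioo_mem_nhdsGT (zero_lt_one)] with ε hε
  have hε0 : (0:ℝ) < ε := hε.1
  have hlog : Real.log ε ≠ 0 := (Real.log_neg hε.1 hε.2).ne
  rw [Real.log_div hε0.ne' two_ne_zero]
  field_simp

/-- Lemma 2, right-boundary version: the pointwise dimension of the convolution at the
right boundary of its support is the sum of the pointwise dimensions of the factors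
at the right boundaries of their supports. -/
theorem pointwise_dim_convolution_right_boundary
    (μ ν : Measure ℝ) [IsFiniteMeasure μ] [IsFiniteMeasure ν]
    (hμ0 : μ ≠ 0) (hν0 : ν ≠ 0)
    (hμc : IsCompact (msupp μ)) (hνc : IsCompact (msupp ν))
    (d₁ d₂ : ℝ)
    (hμ : Tendsto (fun ε : ℝ =>
        Real.log ((μ (Metric.ball (sSup (msupp μ)) ε)).toReal) / Real.log ε)
      (𝓝[>] 0) (𝓝 d₁))
    (hν : Tendsto (fun ε : ℝ =>
        Real.log ((ν (Metric.ball (sSup (msupp ν)) ε)).toReal) / Real.log ε)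
      (𝓝[>] 0) (𝓝 d₂)) :
    Tendsto (fun ε : ℝ =>
        Real.log ((mconv μ ν (Metric.ball (sSup (msupp μ) + sSup (msupp ν)) ε)).toReal) /
          Real.log ε)
      (𝓝[>] 0) (𝓝 (d₁ + d₂)) := by
  set x₀ := sSup (msupp μ) with hx₀def
  set y₀ := sSup (msupp ν) with hy₀def
  have hx₀ : x₀ ∈ msupp μ := hμc.sSup_mem (msupp_nonempty μ hμ0)
  have hy₀ : y₀ ∈ msupp ν := hνc.sSup_mem (msupp_nonempty ν hν0)
  have hμI := measure_Ioi_sSup μ hμc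
  have hνI := measure_Ioi_sSup ν hνc
  -- lower bound function
  have hL : Tendsto (fun ε : ℝ =>
      Real.log ((μ (Metric.ball x₀ ε)).toReal) / Real.log ε +
      Real.log ((ν (Metric.ball y₀ ε)).toReal) / Real.log ε) (𝓝[>] 0) (𝓝 (d₁ + d₂)) :=
    hμ.add hν
  -- upper bound function
  have hU : Tendsto (fun ε : ℝ =>
      (Real.log ((μ (Metric.ball x₀ (ε/2))).toReal) / Real.log (ε/2) +
       Real.log ((ν (Metric.ball y₀ (ε/2))).toReal) / Real.log (ε/2)) *
        (Real.log (ε/2) / Real.log ε)) (𝓝[>] 0) (𝓝 (d₁ + d₂)) := by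
    have h1 : Tendsto (fun ε : ℝ =>
        Real.log ((μ (Metric.ball x₀ (ε/2))).toReal) / Real.log (ε/2) +
        Real.log ((ν (Metric.ball y₀ (ε/2))).toReal) / Real.log (ε/2))
        (𝓝[>] 0) (𝓝 (d₁ + d₂)) := (hμ.add hν).comp tendsto_half
    have := h1.mul tendsto_log_half_div
    simpa using this
  refine tendsto_of_tendsto_of_tendsto_of_le_of_le' hL hU ?_ ?_
  all_goals
    filter_upwards [Ioo_mem_nhdsGT (zero_lt_one : (0:ℝ) < 1)] with ε hε
  all_goals
    have hε0 : (0:ℝ) < ε := hε.1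
    have hε1 : ε < 1 := hε.2
    have hlogneg : Real.log ε < 0 := Real.log_neg hε0 hε1
    have hlog2neg : Real.log (ε/2) < 0 := Real.log_neg (by linarith) (by linarith)
    set a := (μ (Metric.ball x₀ ε)).toReal with ha
    set b := (ν (Metric.ball y₀ ε)).toReal with hb
    set a2 := (μ (Metric.ball x₀ (ε/2))).toReal with ha2
    set b2 := (ν (Metric.ball y₀ (ε/2))).toReal with hb2
    set c := (mconv μ ν (Metric.ball (x₀ + y₀) ε)).toReal with hc
    obtain ⟨hlow, hup⟩ := mconv_ball_bounds μ ν hμI hνI ε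
    have hane : μ (Metric.ball x₀ ε) ≠ ⊤ := measure_ne_top μ _
    have hbne : ν (Metric.ball y₀ ε) ≠ ⊤ := measure_ne_top ν _
    have hcne : mconv μ ν (Metric.ball (x₀ + y₀) ε) ≠ ⊤ :=
      (lt_of_le_of_lt hup (ENNReal.mul_lt_top hane.lt_top hbne.lt_top)).ne
    have hapos : 0 < a := ENNReal.toReal_pos (hx₀ ε hε0).ne' hane
    have hbpos : 0 < b := ENNReal.toReal_pos (hy₀ ε hε0).ne' hbne
    have ha2pos : 0 < a2 := ENNReal.toReal_pos (hx₀ (ε/2) (by linarith)).ne' (measure_ne_top μ _)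
    have hb2pos : 0 < b2 := ENNReal.toReal_pos (hy₀ (ε/2) (by linarith)).ne' (measure_ne_top ν _)
    have hcub : c ≤ a * b := by
      rw [ha, hb, ← ENNReal.toReal_mul]
      exact ENNReal.toReal_mono (ENNReal.mul_ne_top hane hbne) hup
    have hclb : a2 * b2 ≤ c := by
      rw [ha2, hb2, ← ENNReal.toReal_mul]
      exact ENNReal.toReal_mono hcne hlow
    have hcpos : 0 < c := lt_of_lt_of_le (mul_pos ha2pos hb2pos) hclb
  · -- lower bound: (log a + log b)/log ε ≤ log c / log ε
    have h1 : Real.log c ≤ Real.log a + Real.log b := by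
      rw [← Real.log_mul hapos.ne' hbpos.ne']
      exact Real.log_le_log hcpos hcub
    have := div_le_div_of_nonpos_of_le hlogneg.le h1
    rw [add_div] at this
    exact this
  · -- upper bound: log c / log ε ≤ (log a2/log(ε/2) + log b2/log(ε/2)) * (log(ε/2)/log ε)
    have h1 : Real.log a2 + Real.log b2 ≤ Real.log c := by
      rw [← Real.log_mul ha2pos.ne' hb2pos.ne']
      exact Real.log_le_log (mul_pos ha2pos hb2pos) hclb
    have h2 := div_le_div_of_nonpos_of_le hlogneg.le h1
    calc Real.log c / Real.log ε ≤ (Real.log a2 + Real.log b2) / Real.log ε := h2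
      _ = (Real.log a2 / Real.log (ε/2) + Real.log b2 / Real.log (ε/2)) *
            (Real.log (ε/2) / Real.log ε) := by
          field_simp
          rw [mul_div_mul_right _ _ hlog2neg.ne]
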